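/- arXiv:2103.03236 — 2 statements merged into one kernel-verified Lean document; each statement's English description precedes it below -/
import Mathlib

section
/- Performance Difference Lemma (finite horizon): for any two policies π, π_E in a finite MDP with horizon T and reward r, J(π_E) − J(π) = E_{τ∼π_E}[ ∑_{t=1}^T (Q^π_t(s_t, a_t) − E_{a∼π(s_t)}[Q^π_t(s_t, a)]) ], where J(π) = E_{τ∼π}[∑_{t=1}^T r(s_t,a_t)] and Q^π_t(s,a) = E[∑_{t'=t}^T r(s_{t'},a_{t'}) | s_t=s, a_t=a, subsequent actions from π]. -/
open scoped BigOperators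

/-- Expectation of `g` under a probability mass function `p`. -/
noncomputable def pexp {X : Type*} (p : PMF X) (g : X → ℝ) : ℝ :=
  ∑' x, (p x).toReal * g x

/-- Distribution over length-`n` trajectories (lists of state-action pairs)
    obtained by rolling out policy `π` under transition kernel `P` from state `s`. -/
noncomputable def trajFrom {S A : Type*} (π : S → PMF A) (P : S → A → PMF S) :
    ℕ → S → PMF (List (S × A))
  | 0, _ => PMF.pure []
  | n + 1, s =>
      (π s).bind fun a => (P s a).bind fun s' =>
        (trajFrom π P n s').map fun rest => (s, a) :: rest

/-- Distribution over horizon-`T` trajectories from initial distribution `init`. -/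
noncomputable def traj {S A : Type*} (T : ℕ) (init : PMF S) (π : S → PMF A)
    (P : S → A → PMF S) : PMF (List (S × A)) :=
  init.bind (trajFrom π P T)

/-- Cumulative reward of a trajectory. -/
def cumRew {S A : Type*} (r : S → A → ℝ) (τ : List (S × A)) : ℝ :=
  (τ.map fun p => r p.1 p.2).sum

/-- Expected cumulative reward `J(π)` over horizon `T`. -/
noncomputable def J {S A : Type*} (T : ℕ) (init : PMF S) (π : S → PMF A)
    (P : S → A → PMF S) (r : S → A → ℝ) : ℝ :=
  pexp (traj T init π P) (cumRew r)

/-- Action-value function: `Qf π P r n s a` is the expected reward accumulated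
    over `n` remaining steps, starting by taking `a` in `s`, then following `π`. -/
noncomputable def Qf {S A : Type*} (π : S → PMF A) (P : S → A → PMF S)
    (r : S → A → ℝ) : ℕ → S → A → ℝ
  | 0, _, _ => 0
  | n + 1, s, a =>
      r s a + pexp (P s a) fun s' => pexp (π s') fun a' => Qf π P r n s' a'

/-! Induction on the horizon. Unrolling one step of `πE` from `s`, its expected return is
`E_{a∼πE}[r(s,a) + E_{s'}(return of πE from s')]`, while `Q^π(s,a) = r(s,a) + E_{s'} V^π(s')` with
`V^π(s) = E_{a∼π} Q^π(s,a)`. Hence the return of `πE` minus `V^π(s)` is the expected advantage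
`Q^π(s,a) - V^π(s)` of the first action plus the same difference one step later, from `s'`. -/

section pexp

variable {X Y : Type*}

lemma pexp_eq_sum (p : PMF X) (g : X → ℝ) {s : Finset X} (hs : p.support ⊆ s) :
    pexp p g = ∑ x ∈ s, (p x).toReal * g x := by
  refine tsum_eq_sum' (subset_trans (fun x hx => ?_) hs)
  exact (p.mem_support_iff x).2 fun h => hx (by simp [h])

lemma pexp_congr (p : PMF X) {g h : X → ℝ} (H : ∀ x ∈ p.support, g x = h x) :
    pexp p g = pexp p h := by
  refine tsum_congr fun x => ?_
  by_cases hx : p x = 0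
  · simp [hx]
  · rw [H x ((p.mem_support_iff x).2 hx)]

lemma pexp_const (p : PMF X) (c : ℝ) : pexp p (fun _ => c) = c := by
  rw [pexp, tsum_mul_right, ← ENNReal.tsum_toReal_eq p.apply_ne_top, p.tsum_coe,
    ENNReal.toReal_one, one_mul]

lemma pexp_pure (x : X) (g : X → ℝ) : pexp (PMF.pure x) g = g x := by
  classical
  rw [pexp_eq_sum _ _ (s := {x}) (by simp)]
  simp

lemma pexp_add (p : PMF X) (hp : p.support.Finite) (g h : X → ℝ) :
    pexp p (fun x => g x + h x) = pexp p g + pexp p h := by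
  simp only [pexp_eq_sum p _ hp.coe_toFinset.ge, mul_add, Finset.sum_add_distrib]

lemma pexp_sub (p : PMF X) (hp : p.support.Finite) (g h : X → ℝ) :
    pexp p (fun x => g x - h x) = pexp p g - pexp p h := by
  simp only [pexp_eq_sum p _ hp.coe_toFinset.ge, mul_sub, Finset.sum_sub_distrib]

lemma pexp_const_add (p : PMF X) (hp : p.support.Finite) (c : ℝ) (g : X → ℝ) :
    pexp p (fun x => c + g x) = c + pexp p g := by
  rw [pexp_add p hp, pexp_const]

lemma pexp_sub_const (p : PMF X) (hp : p.support.Finite) (g : X → ℝ) (c : ℝ) :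
    pexp p (fun x => g x - c) = pexp p g - c := by
  rw [pexp_sub p hp, pexp_const]

lemma PMF.support_bind_finite {p : PMF X} {f : X → PMF Y} (hp : p.support.Finite)
    (hf : ∀ x ∈ p.support, (f x).support.Finite) : (p.bind f).support.Finite := by
  rw [PMF.support_bind]
  exact hp.biUnion hf

lemma pexp_bind (p : PMF X) (f : X → PMF Y) (g : Y → ℝ) (hp : p.support.Finite)
    (hf : ∀ x ∈ p.support, (f x).support.Finite) :
    pexp (p.bind f) g = pexp p (fun x => pexp (f x) g) := by
  set sX := hp.toFinset
  set sY := (PMF.support_bind_finite hp hf).toFinset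
  have hsY : ∀ x ∈ p.support, (f x).support ⊆ sY := fun x hx y hy =>
    (Set.Finite.mem_toFinset _).2 ((PMF.mem_support_bind_iff p f y).2 ⟨x, hx, hy⟩)
  have hbind : ∀ y, ((p.bind f) y).toReal = ∑ x ∈ sX, (p x).toReal * (f x y).toReal := by
    intro y
    rw [PMF.bind_apply, tsum_eq_sum' (s := sX), ENNReal.toReal_sum fun x _ =>
      ENNReal.mul_ne_top (p.apply_ne_top x) ((f x).apply_ne_top y)]
    · simp only [ENNReal.toReal_mul]
    · intro x hx
      simpa [sX] using left_ne_zero_of_mul hx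
  rw [pexp_eq_sum _ g (PMF.support_bind_finite hp hf).coe_toFinset.ge,
    pexp_eq_sum p _ hp.coe_toFinset.ge]
  simp_rw [hbind, Finset.sum_mul]
  rw [Finset.sum_comm]
  refine Finset.sum_congr rfl fun x hx => ?_
  rw [pexp_eq_sum (f x) g (hsY x ((Set.Finite.mem_toFinset _).1 hx)), Finset.mul_sum]
  exact Finset.sum_congr rfl fun y _ => mul_assoc _ _ _

lemma pexp_map (p : PMF X) (hp : p.support.Finite) (f : X → Y) (g : Y → ℝ) :
    pexp (p.map f) g = pexp p (g ∘ f) := by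
  rw [PMF.map, pexp_bind p _ g hp fun x _ => by simp]
  exact pexp_congr p fun x _ => pexp_pure (f x) g

end pexp

section trajectory

variable {S A : Type*} [Finite S] [Finite A] (P : S → A → PMF S)

lemma trajFrom_support_finite (μ : S → PMF A) (n : ℕ) (s : S) :
    (trajFrom μ P n s).support.Finite := by
  induction n generalizing s with
  | zero => simp [trajFrom]
  | succ n ih =>
    refine PMF.support_bind_finite (Set.toFinite _) fun a _ =>
      PMF.support_bind_finite (Set.toFinite _) fun s' _ => ?_
    rw [PMF.support_map]
    exact (ih s').image _

lemma pexp_trajFrom_succ (μ : S → PMF A) (n : ℕ) (s : S) (g : List (S × A) → ℝ) :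
    pexp (trajFrom μ P (n + 1) s) g =
      pexp (μ s) fun a => pexp (P s a) fun s' =>
        pexp (trajFrom μ P n s') fun rest => g ((s, a) :: rest) := by
  have hmap : ∀ a s', ((trajFrom μ P n s').map ((s, a) :: ·)).support.Finite := fun a s' => by
    rw [PMF.support_map]
    exact (trajFrom_support_finite P μ n s').image _
  rw [trajFrom, pexp_bind _ _ _ (Set.toFinite _) fun a _ =>
    PMF.support_bind_finite (Set.toFinite _) fun s' _ => hmap a s']
  refine pexp_congr _ fun a _ => ?_
  rw [pexp_bind _ _ _ (Set.toFinite _) fun s' _ => hmap a s']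
  exact pexp_congr _ fun s' _ => pexp_map _ (trajFrom_support_finite P μ n s') _ _

lemma pexp_trajFrom_succ_of_cons (μ : S → PMF A) (n : ℕ) (s : S) {g k : List (S × A) → ℝ}
    (h : A → ℝ) (hg : ∀ a rest, g ((s, a) :: rest) = h a + k rest) :
    pexp (trajFrom μ P (n + 1) s) g =
      pexp (μ s) fun a => h a + pexp (P s a) fun s' => pexp (trajFrom μ P n s') k := by
  rw [pexp_trajFrom_succ]
  refine pexp_congr _ fun a _ => ?_
  simp only [hg, pexp_const_add _ (trajFrom_support_finite P μ n _),
    pexp_const_add _ (Set.toFinite _)]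

lemma pexp_traj (T : ℕ) (init : PMF S) (μ : S → PMF A) (g : List (S × A) → ℝ) :
    pexp (traj T init μ P) g = pexp init fun s => pexp (trajFrom μ P T s) g :=
  pexp_bind _ _ _ (Set.toFinite _) fun s _ => trajFrom_support_finite P μ T s

end trajectory

lemma cumRew_cons {S A : Type*} (r : S → A → ℝ) (s : S) (a : A) (τ : List (S × A)) :
    cumRew r ((s, a) :: τ) = r s a + cumRew r τ := by
  simp [cumRew]

noncomputable def Vf {S A : Type*} (π : S → PMF A) (P : S → A → PMF S) (r : S → A → ℝ)
    (n : ℕ) (s : S) : ℝ :=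
  pexp (π s) (Qf π P r n s)

lemma Qf_succ {S A : Type*} (π : S → PMF A) (P : S → A → PMF S) (r : S → A → ℝ) (n : ℕ) (s : S)
    (a : A) : Qf π P r (n + 1) s a = r s a + pexp (P s a) (Vf π P r n) :=
  rfl

noncomputable def advantage {S A : Type*} (π : S → PMF A) (P : S → A → PMF S) (r : S → A → ℝ)
    (n : ℕ) (s : S) (a : A) : ℝ :=
  Qf π P r n s a - Vf π P r n s

noncomputable def advSum {S A : Type*} [Inhabited S] [Inhabited A] (π : S → PMF A)
    (P : S → A → PMF S) (r : S → A → ℝ) (n : ℕ) (τ : List (S × A)) : ℝ :=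
  ∑ t ∈ Finset.range n, advantage π P r (n - t) (τ.getD t default).1 (τ.getD t default).2

lemma advSum_cons {S A : Type*} [Inhabited S] [Inhabited A] (π : S → PMF A)
    (P : S → A → PMF S) (r : S → A → ℝ) (n : ℕ) (s : S) (a : A) (τ : List (S × A)) :
    advSum π P r (n + 1) ((s, a) :: τ) = advantage π P r (n + 1) s a + advSum π P r n τ := by
  rw [advSum, Finset.sum_range_succ', add_comm]
  simp [advSum]

section value

variable {S A : Type*} [Finite S] [Finite A] (π : S → PMF A) (P : S → A → PMF S)
  (r : S → A → ℝ)

lemma pexp_trajFrom_cumRew (n : ℕ) (s : S) :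
    pexp (trajFrom π P n s) (cumRew r) = Vf π P r n s := by
  induction n generalizing s with
  | zero => simp [trajFrom, pexp_pure, cumRew, Vf, Qf, pexp_const]
  | succ n ih =>
    rw [pexp_trajFrom_succ_of_cons P π n s (r s) (cumRew_cons r s)]
    exact pexp_congr _ fun a _ => by simp only [ih, Qf_succ]

lemma pexp_trajFrom_cumRew_sub_Vf [Inhabited S] [Inhabited A] (πE : S → PMF A) (n : ℕ)
    (s : S) :
    pexp (trajFrom πE P n s) (cumRew r) - Vf π P r n s =
      pexp (trajFrom πE P n s) (advSum π P r n) := by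
  induction n generalizing s with
  | zero => simp [trajFrom, pexp_pure, cumRew, advSum, Vf, Qf, pexp_const]
  | succ n ih =>
    rw [pexp_trajFrom_succ_of_cons P πE n s (r s) (cumRew_cons r s),
      pexp_trajFrom_succ_of_cons P πE n s _ (advSum_cons π P r n s),
      ← pexp_sub_const _ (Set.toFinite _)]
    refine pexp_congr _ fun a _ => ?_
    simp only [← ih, pexp_sub _ (Set.toFinite _), advantage, Qf_succ]
    ring

end value

theorem performance_difference_lemma_general {S A : Type*} [Fintype S] [Fintype A]
    [Inhabited S] [Inhabited A]
    (T : ℕ) (init : PMF S) (P : S → A → PMF S) (r : S → A → ℝ)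
    (π πE : S → PMF A) :
    J T init πE P r - J T init π P r =
      pexp (traj T init πE P) (fun τ =>
        ∑ t ∈ Finset.range T,
          (Qf π P r (T - t) (τ.getD t default).1 (τ.getD t default).2 -
            pexp (π (τ.getD t default).1)
              (fun a => Qf π P r (T - t) (τ.getD t default).1 a))) := by
  calc J T init πE P r - J T init π P r
      = pexp init fun s => pexp (trajFrom πE P T s) (cumRew r) - Vf π P r T s := by
        simp only [J, pexp_traj, pexp_trajFrom_cumRew, pexp_sub _ (Set.toFinite _)]
    _ = pexp (traj T init πE P) (advSum π P r T) := by
        simp only [pexp_trajFrom_cumRew_sub_Vf, pexp_traj]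

/-- Performance Difference Lemma (finite horizon):
    J(π_E) − J(π) = E_{τ∼π_E}[∑_{t=1}^T (Q^π_t(s_t,a_t) − E_{a∼π(s_t)} Q^π_t(s_t,a))]. -/
theorem performance_difference_lemma {S A : Type*} [Fintype S] [Fintype A]
    [Inhabited S] [Inhabited A]
    (T : ℕ) (hT : 1 ≤ T) (init : PMF S) (P : S → A → PMF S) (r : S → A → ℝ)
    (π πE : S → PMF A) :
    J T init πE P r - J T init π P r =
      pexp (traj T init πE P) (fun τ =>
        ∑ t ∈ Finset.range T,
          (Qf π P r (T - t) (τ.getD t default).1 (τ.getD t default).2 -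
            pexp (π (τ.getD t default).1)
              (fun a => Qf π P r (T - t) (τ.getD t default).1 a))) :=
  performance_difference_lemma_general T init P r π πE
end

section
/- Entropy regularization transfer: let V : Π → ℝ be Q_M-Lipschitz (w.r.t. ‖·‖₁) with inf_{π∈Π} V(π) = 0, let H : Π → [0, B] and α > 0. Define M(π) = V(π) − αH(π) + αB and suppose M is α-strongly convex with minimizer π^R, and π̂ satisfies M(π̂) ≤ inf M + δ. Then V(π̂) ≤ Q_M √(2δ/α) + αB. -/
/-- Entropy regularization transfer: with V Q_M-Lipschitz, nonnegative with
    infimum 0 on Π, H valued in [0,B], M(π) = V(π) − αH(π) + αB α-strongly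
    convex with minimizer π^R, and M(π̂) ≤ M(π^R) + δ, we get
    V(π̂) ≤ Q_M √(2δ/α) + αB. -/
theorem entropy_regularization_transfer {E : Type*} [NormedAddCommGroup E]
    [NormedSpace ℝ E] (P : Set E) (hPconv : Convex ℝ P) (hPcomp : IsCompact P)
    (V H : E → ℝ) (QM B α δ : ℝ) (hQM : 0 ≤ QM) (hB : 0 ≤ B) (hα : 0 < α)
    (hδ : 0 ≤ δ)
    (hLipV : ∀ x ∈ P, ∀ y ∈ P, |V x - V y| ≤ QM * ‖x - y‖)
    (hVnonneg : ∀ x ∈ P, 0 ≤ V x) (hVinf : sInf (V '' P) = 0)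
    (hHrange : ∀ x ∈ P, 0 ≤ H x ∧ H x ≤ B)
    (hstrong : StrongConvexOn P α (fun x => V x - α * H x + α * B))
    (πR : E) (hπR : πR ∈ P)
    (hmin : ∀ x ∈ P, V πR - α * H πR + α * B ≤ V x - α * H x + α * B)
    (πhat : E) (hπhat : πhat ∈ P)
    (hδgap : V πhat - α * H πhat + α * B ≤ (V πR - α * H πR + α * B) + δ) :
    V πhat ≤ QM * Real.sqrt (2 * δ / α) + α * B := by
  set f : E → ℝ := fun x => V x - α * H x + α * B with hf
  set d : ℝ := ‖πhat - πR‖ with hd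
  set K : ℝ := α / 2 * d ^ 2 with hK
  have hKnn : 0 ≤ K := by positivity
  -- step 1 : K ≤ δ
  have hKδ : K ≤ δ := by
    refine le_of_forall_pos_le_add fun ε hε => ?_
    set t : ℝ := min (1/2) (ε / (K + 1)) with ht
    have htpos : 0 < t := lt_min (by norm_num) (by positivity)
    have ht1 : t ≤ 1/2 := min_le_left _ _
    have h1t : 0 ≤ 1 - t := by linarith
    have hsc := hstrong.2 hπhat hπR (le_of_lt htpos) h1t (by ring)
    have hmem : t • πhat + (1 - t) • πR ∈ P :=
      hPconv hπhat hπR (le_of_lt htpos) h1t (by ring)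
    have hlb := hmin _ hmem
    have hfhat : f πhat ≤ f πR + δ := hδgap
    simp only [smul_eq_mul] at hsc
    have key : (1 - t) * K ≤ f πhat - f πR := by
      have : f πR ≤ t * f πhat + (1 - t) * f πR - t * (1 - t) * (α / 2 * d ^ 2) := le_trans hlb hsc
      have h2 : t * ((1 - t) * K) ≤ t * (f πhat - f πR) := by
        simp only [hK]; nlinarith [this]
      exact le_of_mul_le_mul_left h2 htpos
    have htK : t * K ≤ ε := by
      have : t ≤ ε / (K + 1) := min_le_right _ _
      have h3 : t * (K + 1) ≤ ε := by
        rw [← le_div_iff₀ (by positivity)]; exact this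
      nlinarith
    nlinarith
  -- step 2 : d ≤ sqrt (2δ/α)
  have hd2 : d ^ 2 ≤ 2 * δ / α := by
    rw [le_div_iff₀ hα]; nlinarith
  have hdle : d ≤ Real.sqrt (2 * δ / α) := by
    have := Real.sqrt_le_sqrt hd2
    rwa [Real.sqrt_sq (norm_nonneg _)] at this
  -- step 3 : V πR ≤ α * B
  have hVπR : V πR ≤ α * B := by
    have hlow : V πR - α * H πR ≤ sInf (V '' P) := by
      refine le_csInf ⟨V πR, Set.mem_image_of_mem _ hπR⟩ ?_
      rintro v ⟨x, hx, rfl⟩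
      have := hmin x hx
      have hHx := (hHrange x hx).1
      nlinarith
    rw [hVinf] at hlow
    have hHπR := (hHrange πR hπR).2
    nlinarith
  -- conclude
  have hlip := hLipV πhat hπhat πR hπR
  have : V πhat - V πR ≤ QM * d := le_trans (le_abs_self _) hlip
  have : QM * d ≤ QM * Real.sqrt (2 * δ / α) := by gcongr
  nlinarith [le_trans (le_abs_self (V πhat - V πR)) hlip]
end
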